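/- arXiv:2603.05662 — 6 statements merged into one kernel-verified Lean document; each statement's English description precedes it below -/
import Mathlib

section
/- Let G be a graph with n edges and m vertices, and let b be a β-valuation of G. For each vertex v, let A_v = {b(v)}, regarded as a singleton subset of Z_{n+1}. Then the family (A_v)_{v ∈ V(G)} is an (n,m,1,1;G^b)-EDF in Z_{n+1}; that is, the multiset ⋃_{(u,v) ∈ E(G^b)} {b(v) − b(u)} equals Z_{n+1} ∖ {0}. -/
/-- A β-valuation (graceful labelling) of a graph `G` with `n` edges: an injective labelling
into `{0,…,n}` whose multiset of edge-label differences (each edge taken along its natural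
orientation, towards the larger label) is exactly `{1,…,n}`. -/
def IsBetaValuation {V : Type*} [Fintype V] [DecidableEq V] (G : SimpleGraph V)
    [DecidableRel G.Adj] (n : ℕ) (b : V → ℕ) : Prop :=
  Function.Injective b ∧ (∀ v, b v ≤ n) ∧ G.edgeFinset.card = n ∧
    ((Finset.univ.filter fun p : V × V => G.Adj p.1 p.2 ∧ b p.1 < b p.2).val.map
        fun p => b p.2 - b p.1) = (Finset.Icc 1 n).val

/-- Theorem: if `G` is a graph with `n` edges and a β-valuation `b`, then the singleton sets
`A_v = {b v}` form an `(n, m, 1, 1; G^b)`-EDF in `Z_{n+1}`, where `G^b` is the natural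
orientation of `G` (each edge directed towards the larger label). -/
theorem beta_valuation_gives_EDF
    {V : Type*} [Fintype V] [DecidableEq V] (G : SimpleGraph V) [DecidableRel G.Adj]
    (n m : ℕ) (hn : G.edgeFinset.card = n) (hm : Fintype.card V = m)
    (b : V → ℕ) (hbeta : IsBetaValuation G n b) :
    ((Finset.univ.filter fun p : V × V => G.Adj p.1 p.2 ∧ b p.1 < b p.2).val.map
        fun p => ((b p.2 : ZMod (n + 1)) - (b p.1 : ZMod (n + 1))))
      = (Finset.univ \ {0} : Finset (ZMod (n + 1))).val := by
  obtain ⟨hinj, hle, hcard, hmap⟩ := hbeta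
  have h1 : ((Finset.univ.filter fun p : V × V => G.Adj p.1 p.2 ∧ b p.1 < b p.2).val.map
        fun p => ((b p.2 : ZMod (n + 1)) - (b p.1 : ZMod (n + 1))))
      = ((Finset.univ.filter fun p : V × V => G.Adj p.1 p.2 ∧ b p.1 < b p.2).val.map
        fun p => ((b p.2 - b p.1 : ℕ) : ZMod (n + 1))) := by
    apply Multiset.map_congr rfl
    intro p hp
    simp only [Finset.mem_val, Finset.mem_filter] at hp
    rw [Nat.cast_sub hp.2.2.le]
  rw [h1,
    show (fun p : V × V => ((b p.2 - b p.1 : ℕ) : ZMod (n + 1)))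
      = (fun k : ℕ => (k : ZMod (n + 1))) ∘ (fun p : V × V => b p.2 - b p.1) from rfl,
    ← Multiset.map_map, hmap]
  have hnd : ((Finset.Icc 1 n).val.map (fun k : ℕ => (k : ZMod (n + 1)))).Nodup := by
    refine Multiset.Nodup.map_on ?_ (Finset.Icc 1 n).nodup
    intro x hx y hy hxy
    simp only [Finset.mem_val, Finset.mem_Icc] at hx hy
    have := congrArg ZMod.val hxy
    rwa [ZMod.val_natCast_of_lt (by omega), ZMod.val_natCast_of_lt (by omega)] at this
  have hfs : (⟨_, hnd⟩ : Finset (ZMod (n + 1))) = Finset.univ \ {0} := by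
    ext x
    simp only [Finset.mem_mk, Multiset.mem_map, Finset.mem_val, Finset.mem_Icc,
      Finset.mem_sdiff, Finset.mem_univ, Finset.mem_singleton, true_and]
    constructor
    · rintro ⟨k, ⟨hk1, hk2⟩, rfl⟩
      intro h0
      have := congrArg ZMod.val h0
      rw [ZMod.val_natCast_of_lt (by omega), ZMod.val_zero] at this
      omega
    · intro hx
      refine ⟨x.val, ⟨?_, ?_⟩, ?_⟩
      · have : x.val ≠ 0 := fun h => hx ((ZMod.val_eq_zero x).mp h)
        omega
      · have := ZMod.val_lt x; omega
      · simp [ZMod.natCast_val, ZMod.cast_id]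
  exact congrArg Finset.val hfs
end

section
/- Let P_m denote the path with m vertices v_1,…,v_m and edges {v_i, v_{i+1}} for 1 ≤ i ≤ m−1. Then the vertex-labelling a given by a(v_i) = (i−1)/2 when i is odd and a(v_i) = m − i/2 when i is even is an α-valuation of P_m. -/
/-- An α-valuation: a β-valuation admitting a separating value `x` such that each edge has one
endpoint labelled `≤ x` and the other labelled `> x`. -/
def IsAlphaValuation {V : Type*} [Fintype V] [DecidableEq V] (G : SimpleGraph V)
    [DecidableRel G.Adj] (n : ℕ) (b : V → ℕ) : Prop :=
  IsBetaValuation G n b ∧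
    ∃ x, x ≤ n ∧ ∀ u v, G.Adj u v → (b v ≤ x ∧ x < b u) ∨ (b u ≤ x ∧ x < b v)

/-- The path `P_m` on vertices `v_1, …, v_m` (here indexed by `Fin m`, with `v_i` at index
`i - 1`), with edges `{v_i, v_{i+1}}`. -/
def PathG (m : ℕ) : SimpleGraph (Fin m) where
  Adj i j := i.val + 1 = j.val ∨ j.val + 1 = i.val
  symm := ⟨by intro i j h; tauto⟩
  loopless := ⟨by intro i h; rcases h with h | h <;> omega⟩

instance (m : ℕ) : DecidableRel (PathG m).Adj :=
  fun i j => inferInstanceAs (Decidable (i.val + 1 = j.val ∨ j.val + 1 = i.val))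


/-- the directed edge (smaller label first) corresponding to edge `{k, k+1}`. -/
def gp (m k : ℕ) (hm : 0 < m) : Fin m × Fin m :=
  if k % 2 = 0 then (⟨k % m, Nat.mod_lt _ hm⟩, ⟨(k+1) % m, Nat.mod_lt _ hm⟩)
  else (⟨(k+1) % m, Nat.mod_lt _ hm⟩, ⟨k % m, Nat.mod_lt _ hm⟩)

/-- the undirected edge `{k, k+1}`. -/
def ge (m k : ℕ) (hm : 0 < m) : Sym2 (Fin m) :=
  s(⟨k % m, Nat.mod_lt _ hm⟩, ⟨(k+1) % m, Nat.mod_lt _ hm⟩)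

/-- Theorem: the labelling `a(v_i) = (i-1)/2` for `i` odd and `a(v_i) = m - i/2` for `i` even is
an α-valuation of the path `P_m` (which has `m - 1` edges).  With `k = i - 1` the label of the
vertex at index `k` is `k/2` when `k` is even and `m - (k+1)/2` when `k` is odd. -/
theorem path_alpha_valuation (m : ℕ) :
    IsAlphaValuation (PathG m) (m - 1)
      (fun k : Fin m => if k.val % 2 = 0 then k.val / 2 else m - (k.val + 1) / 2) := by
  set b : Fin m → ℕ :=
    fun k : Fin m => if k.val % 2 = 0 then k.val / 2 else m - (k.val + 1) / 2 with hb
  rcases Nat.eq_zero_or_pos m with hm | hm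
  · subst hm
    refine ⟨⟨fun a => a.elim0, fun v => v.elim0, by decide, by decide⟩,
      0, le_refl _, fun u => u.elim0⟩
  set n := m - 1 with hn
  have hbval : ∀ k : Fin m, b k = if k.val % 2 = 0 then k.val / 2 else m - (k.val + 1) / 2 :=
    fun k => rfl
  -- injectivity
  have hinj : Function.Injective b := by
    intro j k h
    rw [hbval, hbval] at h
    have hj := j.isLt
    have hk := k.isLt
    have : j.val = k.val := by split_ifs at h <;> omega
    exact Fin.ext this
  -- the filtered finset
  have hF : (Finset.univ.filter fun p : Fin m × Fin m =>
      (PathG m).Adj p.1 p.2 ∧ b p.1 < b p.2) =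
      (Finset.range n).image (fun k => gp m k hm) := by
    ext p
    obtain ⟨u, v⟩ := p
    simp only [Finset.mem_filter, Finset.mem_univ, true_and, Finset.mem_image,
      Finset.mem_range]
    simp only [PathG]
    have hu := u.isLt
    have hv := v.isLt
    have hmu : u.val % m = u.val := Nat.mod_eq_of_lt hu
    have hmv : v.val % m = v.val := Nat.mod_eq_of_lt hv
    constructor
    · rintro ⟨h | h, hlt⟩
      · refine ⟨u.val, by omega, ?_⟩
        rw [hbval, hbval] at hlt
        have hpar : u.val % 2 = 0 := by split_ifs at hlt <;> omega
        rw [gp, if_pos hpar]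
        have h1 : (u.val + 1) % m = u.val + 1 := Nat.mod_eq_of_lt (by omega)
        refine Prod.ext (Fin.ext ?_) (Fin.ext ?_) <;> simp <;> omega
      · refine ⟨v.val, by omega, ?_⟩
        rw [hbval, hbval] at hlt
        have hpar : ¬ (v.val % 2 = 0) := by split_ifs at hlt <;> omega
        rw [gp, if_neg hpar]
        have h1 : (v.val + 1) % m = v.val + 1 := Nat.mod_eq_of_lt (by omega)
        refine Prod.ext (Fin.ext ?_) (Fin.ext ?_) <;> simp <;> omega
    · rintro ⟨k, hk, heq⟩
      have hkm : k % m = k := Nat.mod_eq_of_lt (by omega)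
      have hkm1 : (k + 1) % m = k + 1 := Nat.mod_eq_of_lt (by omega)
      rw [gp] at heq
      split_ifs at heq with hpar
      · obtain ⟨h1, h2⟩ := Prod.mk.injEq .. ▸ heq
        have hu1 : u.val = k := by rw [← h1]; simp [hkm]
        have hv1 : v.val = k + 1 := by rw [← h2]; simp [hkm1]
        refine ⟨Or.inl (by omega), ?_⟩
        rw [hbval, hbval]
        have hp1 : (k + 1) % 2 ≠ 0 := by omega
        rw [hu1, hv1, if_pos hpar, if_neg hp1]
        omega
      · obtain ⟨h1, h2⟩ := Prod.mk.injEq .. ▸ heq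
        have hu1 : u.val = k + 1 := by rw [← h1]; simp [hkm1]
        have hv1 : v.val = k := by rw [← h2]; simp [hkm]
        refine ⟨Or.inr (by omega), ?_⟩
        rw [hbval, hbval]
        have hp1 : (k + 1) % 2 = 0 := by omega
        rw [hu1, hv1, if_pos hp1, if_neg hpar]
        omega
  have hgpinj : Set.InjOn (fun k => gp m k hm) (Finset.range n) := by
    intro j hj k hk h
    simp only [Finset.mem_coe, Finset.mem_range] at hj hk
    have hjm : j % m = j := Nat.mod_eq_of_lt (by omega)
    have hjm1 : (j + 1) % m = j + 1 := Nat.mod_eq_of_lt (by omega)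
    have hkm : k % m = k := Nat.mod_eq_of_lt (by omega)
    have hkm1 : (k + 1) % m = k + 1 := Nat.mod_eq_of_lt (by omega)
    simp only [gp] at h
    split_ifs at h <;>
      simp only [Prod.mk.injEq, Fin.mk.injEq, hjm, hjm1, hkm, hkm1] at h <;> omega
  -- edge set
  have hE : (PathG m).edgeFinset = (Finset.range n).image (fun k => ge m k hm) := by
    ext e
    induction e using Sym2.ind with
    | _ u v =>
      simp only [SimpleGraph.mem_edgeFinset, SimpleGraph.mem_edgeSet,
        Finset.mem_image, Finset.mem_range, ge, Sym2.eq_iff, Fin.ext_iff]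
      simp only [PathG]
      have hu := u.isLt
      have hv := v.isLt
      have hmu : u.val % m = u.val := Nat.mod_eq_of_lt hu
      have hmv : v.val % m = v.val := Nat.mod_eq_of_lt hv
      constructor
      · rintro (h | h)
        · have h1 : (u.val + 1) % m = u.val + 1 := Nat.mod_eq_of_lt (by omega)
          refine ⟨u.val, by omega, Or.inl ⟨?_, ?_⟩⟩ <;> omega
        · have h1 : (v.val + 1) % m = v.val + 1 := Nat.mod_eq_of_lt (by omega)
          refine ⟨v.val, by omega, Or.inr ⟨?_, ?_⟩⟩ <;> omega
      · rintro ⟨k, hk, (⟨h1, h2⟩ | ⟨h1, h2⟩)⟩ <;>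
        · have hkm : k % m = k := Nat.mod_eq_of_lt (by omega)
          have hkm1 : (k + 1) % m = k + 1 := Nat.mod_eq_of_lt (by omega)
          simp only [hkm, hkm1] at h1 h2
          omega
  have hgeinj : Set.InjOn (fun k => ge m k hm) (Finset.range n) := by
    intro j hj k hk h
    simp only [Finset.mem_coe, Finset.mem_range] at hj hk
    simp only [ge, Sym2.eq_iff, Fin.mk.injEq] at h
    have hjm : j % m = j := Nat.mod_eq_of_lt (by omega)
    have hjm1 : (j + 1) % m = j + 1 := Nat.mod_eq_of_lt (by omega)
    have hkm : k % m = k := Nat.mod_eq_of_lt (by omega)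
    have hkm1 : (k + 1) % m = k + 1 := Nat.mod_eq_of_lt (by omega)
    omega
  have hcard : (PathG m).edgeFinset.card = n := by
    rw [hE, Finset.card_image_of_injOn hgeinj, Finset.card_range]
  -- the multiset of differences
  have hmul : ((Finset.univ.filter fun p : Fin m × Fin m =>
      (PathG m).Adj p.1 p.2 ∧ b p.1 < b p.2).val.map
        fun p => b p.2 - b p.1) = (Finset.Icc 1 n).val := by
    rw [hF, Finset.image_val_of_injOn hgpinj, Multiset.map_map]
    have step1 : Multiset.map ((fun p : Fin m × Fin m => b p.2 - b p.1) ∘ fun k => gp m k hm)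
        (Finset.range n).val = Multiset.map (fun k => n - k) (Finset.range n).val := by
      apply Multiset.map_congr rfl
      intro k hk
      rw [Finset.mem_val, Finset.mem_range] at hk
      have hkm : k % m = k := Nat.mod_eq_of_lt (by omega)
      have hkm1 : (k + 1) % m = k + 1 := Nat.mod_eq_of_lt (by omega)
      simp only [Function.comp_apply, gp]
      split_ifs with hpar
      · rw [hbval, hbval]
        simp only [hkm, hkm1]
        have h1 : (k + 1) % 2 ≠ 0 := by omega
        rw [if_pos hpar, if_neg h1]
        omega
      · rw [hbval, hbval]
        simp only [hkm, hkm1]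
        have h1 : (k + 1) % 2 = 0 := by omega
        rw [if_pos h1, if_neg hpar]
        omega
    rw [step1]
    have hsubinj : Set.InjOn (fun k => n - k) (Finset.range n) := by
      intro j hj k hk h
      simp only [Finset.mem_coe, Finset.mem_range] at hj hk
      simp only at h
      omega
    rw [← Finset.image_val_of_injOn hsubinj]
    congr 1
    ext a
    simp only [Finset.mem_image, Finset.mem_range, Finset.mem_Icc]
    constructor
    · rintro ⟨k, hk, rfl⟩; omega
    · rintro ⟨h1, h2⟩; exact ⟨n - a, by omega, by omega⟩
  refine ⟨⟨hinj, ?_, hcard, hmul⟩, (m - 1) / 2, by omega, ?_⟩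
  · intro v
    rw [hbval]
    have := v.isLt
    split_ifs <;> omega
  · intro u v huv
    rcases huv with h | h <;>
    · rw [hbval, hbval]
      have hu := u.isLt
      have hv := v.isLt
      split_ifs <;> omega
end

section
/- Let K_{p,q} denote the complete bipartite graph with vertex set {v_1,…,v_p} ∪ {u_1,…,u_q}, where every v_i is adjacent to every u_j. Then the vertex-labelling a given by a(v_i) = i−1 for 1 ≤ i ≤ p and a(u_j) = jp for 1 ≤ j ≤ q is an α-valuation of K_{p,q}. -/
instance (p q : ℕ) : DecidableRel (completeBipartiteGraph (Fin p) (Fin q)).Adj :=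
  fun a b => inferInstanceAs (Decidable (a.isLeft ∧ b.isRight ∨ a.isRight ∧ b.isLeft))

lemma g_injective (p q : ℕ) :
    Function.Injective (fun ij : Fin p × Fin q => (ij.2.val + 1) * p - ij.1.val) := by
  rintro ⟨i, j⟩ ⟨i', j'⟩ h
  simp only at h
  have hi := i.isLt
  have hi' := i'.isLt
  have hj : j = j' := by
    rcases lt_trichotomy j.val j'.val with hlt | heq | hgt
    · exfalso
      have : (j.val + 2) * p ≤ (j'.val + 1) * p := Nat.mul_le_mul_right p (by omega)
      have h2 : (j.val + 2) * p = (j.val + 1) * p + p := by ring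
      omega
    · exact Fin.ext heq
    · exfalso
      have : (j'.val + 2) * p ≤ (j.val + 1) * p := Nat.mul_le_mul_right p (by omega)
      have h2 : (j'.val + 2) * p = (j'.val + 1) * p + p := by ring
      omega
  subst hj
  have hle : i.val < (j.val + 1) * p := lt_of_lt_of_le hi (Nat.le_mul_of_pos_left p (by omega))
  have hle' : i'.val < (j.val + 1) * p := lt_of_lt_of_le hi' (Nat.le_mul_of_pos_left p (by omega))
  have : i = i' := Fin.ext (by omega)
  simp [this]

lemma g_map_eq (p q : ℕ) (hp : 1 ≤ p) (hq : 1 ≤ q) :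
    (Finset.univ.val.map fun ij : Fin p × Fin q => (ij.2.val + 1) * p - ij.1.val)
      = (Finset.Icc 1 (p * q)).val := by
  have hnd : (Finset.univ.val.map
      fun ij : Fin p × Fin q => (ij.2.val + 1) * p - ij.1.val).Nodup :=
    Finset.univ.nodup.map (g_injective p q)
  rw [Multiset.Nodup.ext hnd (Finset.Icc 1 (p * q)).nodup]
  intro d
  simp only [Multiset.mem_map, Finset.mem_val, Finset.mem_univ, true_and, Finset.mem_Icc]
  constructor
  · rintro ⟨⟨i, j⟩, rfl⟩
    have hi := i.isLt
    have hj := j.isLt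
    have h1 : (j.val + 1) * p ≤ q * p := Nat.mul_le_mul_right p (by omega)
    have h2 : q * p = p * q := Nat.mul_comm q p
    have h3 : p ≤ (j.val + 1) * p := Nat.le_mul_of_pos_left p (by omega)
    simp only
    omega
  · rintro ⟨hd1, hd2⟩
    refine ⟨⟨⟨((d - 1) / p + 1) * p - d, ?_⟩, ⟨(d - 1) / p, ?_⟩⟩, ?_⟩
    · have h1 : p * ((d - 1) / p) ≤ d - 1 := Nat.mul_div_le (d - 1) p
      have h2 : ((d - 1) / p + 1) * p = p * ((d - 1) / p) + p := by ring
      omega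
    · rw [Nat.div_lt_iff_lt_mul (by omega)]
      have : q * p = p * q := Nat.mul_comm q p
      omega
    · simp only
      have h1 : p * ((d - 1) / p) ≤ d - 1 := Nat.mul_div_le (d - 1) p
      have h3 := Nat.div_add_mod (d - 1) p
      have h4 : (d - 1) % p < p := Nat.mod_lt _ (by omega)
      have h2 : ((d - 1) / p + 1) * p = p * ((d - 1) / p) + p := by ring
      omega

/-- Theorem: for the complete bipartite graph `K_{p,q}` with parts `{v_1,…,v_p}` and
`{u_1,…,u_q}` (here `v_i = Sum.inl ⟨i-1⟩` and `u_j = Sum.inr ⟨j-1⟩`), the labelling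
`a(v_i) = i - 1`, `a(u_j) = j·p` is an α-valuation (note `K_{p,q}` has `p·q` edges). -/
theorem completeBipartite_alpha_valuation (p q : ℕ) (hp : 1 ≤ p) (hq : 1 ≤ q) :
    IsAlphaValuation (completeBipartiteGraph (Fin p) (Fin q)) (p * q)
      (Sum.elim (fun i : Fin p => i.val) (fun j : Fin q => (j.val + 1) * p)) := by
  set G := completeBipartiteGraph (Fin p) (Fin q) with hG
  set b : Fin p ⊕ Fin q → ℕ :=
    Sum.elim (fun i : Fin p => i.val) (fun j : Fin q => (j.val + 1) * p) with hb
  -- basic bounds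
  have hbl : ∀ i : Fin p, b (Sum.inl i) = i.val := fun i => rfl
  have hbr : ∀ j : Fin q, b (Sum.inr j) = (j.val + 1) * p := fun j => rfl
  have hlt : ∀ (i : Fin p) (j : Fin q), b (Sum.inl i) < b (Sum.inr j) := by
    intro i j
    have h3 : p ≤ (j.val + 1) * p := Nat.le_mul_of_pos_left p (by omega)
    have := i.isLt
    simpa [hbl, hbr] using lt_of_lt_of_le this h3
  -- the filtered finset equals image of Fin p × Fin q
  have hfilter : (Finset.univ.filter fun pa : (Fin p ⊕ Fin q) × (Fin p ⊕ Fin q) =>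
      G.Adj pa.1 pa.2 ∧ b pa.1 < b pa.2) =
      Finset.univ.image (fun ij : Fin p × Fin q => (Sum.inl ij.1, Sum.inr ij.2)) := by
    ext ⟨a₁, a₂⟩
    simp only [Finset.mem_filter, Finset.mem_univ, true_and, Finset.mem_image, Prod.mk.injEq]
    cases a₁ with
    | inl i =>
      cases a₂ with
      | inl i' => simp [hG, completeBipartiteGraph]
      | inr j =>
        simp only [hG, completeBipartiteGraph]
        constructor
        · intro _; exact ⟨(i, j), rfl, rfl⟩
        · intro _; exact ⟨Or.inl ⟨rfl, rfl⟩, hlt i j⟩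
    | inr j =>
      cases a₂ with
      | inl i =>
        simp only [hG, completeBipartiteGraph]
        constructor
        · rintro ⟨-, habs⟩
          exact absurd habs (Nat.not_lt.mpr (hlt i j).le)
        · rintro ⟨⟨i', j'⟩, h1, -⟩; exact absurd h1 (by simp)
      | inr j' => simp [hG, completeBipartiteGraph]
  have hinj : Function.Injective
      (fun ij : Fin p × Fin q => ((Sum.inl ij.1 : Fin p ⊕ Fin q), (Sum.inr ij.2 : Fin p ⊕ Fin q))) := by
    rintro ⟨i, j⟩ ⟨i', j'⟩ h
    simp only [Prod.mk.injEq, Sum.inl.injEq, Sum.inr.injEq] at h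
    exact Prod.ext h.1 h.2
  have hval : (Finset.univ.filter fun pa : (Fin p ⊕ Fin q) × (Fin p ⊕ Fin q) =>
      G.Adj pa.1 pa.2 ∧ b pa.1 < b pa.2).val =
      Finset.univ.val.map (fun ij : Fin p × Fin q => (Sum.inl ij.1, Sum.inr ij.2)) := by
    rw [hfilter, Finset.image_val,
      Multiset.dedup_eq_self.mpr (Finset.univ.nodup.map hinj)]
  -- the multiset of differences
  have hmult : ((Finset.univ.filter fun pa : (Fin p ⊕ Fin q) × (Fin p ⊕ Fin q) =>
      G.Adj pa.1 pa.2 ∧ b pa.1 < b pa.2).val.map fun pa => b pa.2 - b pa.1) =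
      (Finset.Icc 1 (p * q)).val := by
    rw [hval, Multiset.map_map]
    exact g_map_eq p q hp hq
  -- edge count
  have hedge : G.edgeFinset.card = p * q := by
    have himg : G.edgeFinset =
        Finset.univ.image (fun ij : Fin p × Fin q => s(Sum.inl ij.1, Sum.inr ij.2)) := by
      ext e
      induction e with
      | _ a₁ a₂ =>
        simp only [SimpleGraph.mem_edgeFinset, SimpleGraph.mem_edgeSet, Finset.mem_image,
          Finset.mem_univ, true_and]
        cases a₁ with
        | inl i =>
          cases a₂ with
          | inl i' => simp [hG, completeBipartiteGraph, Sym2.eq_iff]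
          | inr j =>
            simp only [hG, completeBipartiteGraph]
            constructor
            · intro _; exact ⟨(i, j), rfl⟩
            · intro _; simp
        | inr j =>
          cases a₂ with
          | inl i =>
            simp only [hG, completeBipartiteGraph]
            constructor
            · intro _; exact ⟨(i, j), Sym2.eq_swap⟩
            · intro _; simp
          | inr j' => simp [hG, completeBipartiteGraph, Sym2.eq_iff]
    rw [himg, Finset.card_image_of_injective _ ?_, Finset.card_univ, Fintype.card_prod,
      Fintype.card_fin, Fintype.card_fin]
    rintro ⟨i, j⟩ ⟨i', j'⟩ h
    simp only [Sym2.eq_iff, Prod.mk.injEq] at h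
    rcases h with ⟨h1, h2⟩ | ⟨h1, h2⟩
    · exact Prod.ext (Sum.inl_injective h1) (Sum.inr_injective h2)
    · exact absurd h1 (by simp)
  refine ⟨⟨?_, ?_, hedge, hmult⟩, p - 1, by have : p ≤ p * q := Nat.le_mul_of_pos_right p (by omega); omega, ?_⟩
  · -- injectivity of b
    rintro (i | j) (i' | j') h
    · simp only [hbl] at h; exact congrArg Sum.inl (Fin.ext h)
    · exact absurd h (Nat.ne_of_lt (hlt i j'))
    · exact absurd h.symm (Nat.ne_of_lt (hlt i' j))
    · simp only [hbr] at h
      have : j.val = j'.val := by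
        have := Nat.eq_of_mul_eq_mul_right (show 0 < p by omega) h
        omega
      exact congrArg Sum.inr (Fin.ext this)
  · -- bounds
    rintro (i | j)
    · have := i.isLt; have : p ≤ p * q := Nat.le_mul_of_pos_right p (by omega)
      simp only [hbl]; omega
    · have hj := j.isLt
      have h1 : (j.val + 1) * p ≤ q * p := Nat.mul_le_mul_right p (by omega)
      have h2 : q * p = p * q := Nat.mul_comm q p
      simp only [hbr]; omega
  · -- separating value
    rintro (i | j) (i' | j') hadj
    · exact absurd hadj (by simp [hG, completeBipartiteGraph])
    · right
      have := i.isLt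
      have h3 : p ≤ (j'.val + 1) * p := Nat.le_mul_of_pos_left p (by omega)
      exact ⟨by simp only [hbl]; omega, by simp only [hbr]; omega⟩
    · left
      have := i'.isLt
      have h3 : p ≤ (j.val + 1) * p := Nat.le_mul_of_pos_left p (by omega)
      exact ⟨by simp only [hbl]; omega, by simp only [hbr]; omega⟩
    · exact absurd hadj (by simp [hG, completeBipartiteGraph])
end

section
/- Let m ≡ 0 (mod 4) and let C_m denote the cycle with vertices v_1,…,v_m and edges {v_i,v_{i+1}} for 1 ≤ i ≤ m−1 together with {v_m,v_1}. Then the vertex-labelling a given by a(v_i) = (i−1)/2 when i is odd, a(v_i) = m + 1 − i/2 when i is even and i ≤ m/2, and a(v_i) = m − i/2 when i is even and i > m/2, is an α-valuation of C_m. -/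
/-- The cycle `C_m` on vertices `v_1, …, v_m` (indexed by `Fin m`, with `v_i` at index `i-1`),
with edges `{v_i, v_{i+1}}` for `1 ≤ i ≤ m-1` and `{v_m, v_1}`. -/
def CycleG (m : ℕ) : SimpleGraph (Fin m) where
  Adj i j := i ≠ j ∧ ((i.val + 1) % m = j.val ∨ (j.val + 1) % m = i.val)
  symm := ⟨by rintro i j ⟨h1, h2⟩; exact ⟨Ne.symm h1, Or.symm h2⟩⟩
  loopless := ⟨fun i h => h.1 rfl⟩

instance (m : ℕ) : DecidableRel (CycleG m).Adj :=
  fun i j => inferInstanceAs (Decidable (i ≠ j ∧ ((i.val + 1) % m = j.val ∨ (j.val + 1) % m = i.val)))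

/-- The labelling of the theorem, as a standalone definition. -/
def lab (m : ℕ) (k : Fin m) : ℕ :=
  if k.val % 2 = 0 then k.val / 2
  else if k.val + 1 ≤ m / 2 then m + 1 - (k.val + 1) / 2
  else m - (k.val + 1) / 2

/-- Theorem: for `m ≡ 0 (mod 4)`, the labelling `a(v_i) = (i-1)/2` for `i` odd,
`a(v_i) = m + 1 - i/2` for `i` even with `i ≤ m/2`, and `a(v_i) = m - i/2` for `i` even with
`i > m/2`, is an α-valuation of `C_m` (which has `m` edges).  With `k = i - 1` the label at
index `k` is `k/2` for `k` even, `m + 1 - (k+1)/2` for `k` odd with `k + 1 ≤ m/2`, and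
`m - (k+1)/2` for `k` odd with `k + 1 > m/2`. -/
theorem cycle_alpha_valuation (m : ℕ) (hm : m % 4 = 0) :
    IsAlphaValuation (CycleG m) m
      (fun k : Fin m =>
        if k.val % 2 = 0 then k.val / 2
        else if k.val + 1 ≤ m / 2 then m + 1 - (k.val + 1) / 2
        else m - (k.val + 1) / 2) := by
  show IsAlphaValuation (CycleG m) m (lab m)
  rcases Nat.eq_zero_or_pos m with hm0 | hmpos
  · subst hm0
    refine ⟨⟨fun x => x.elim0, fun v => v.elim0, by decide, by decide⟩,
      0, le_refl 0, fun u => u.elim0⟩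
  have hm4 : 4 ≤ m := by omega
  haveI : NeZero m := ⟨by omega⟩
  -- basic facts about the labelling
  have hBle : ∀ k : Fin m, lab m k ≤ m := by
    intro k; have := k.isLt; unfold lab; split_ifs <;> omega
  have hBsmall : ∀ k : Fin m, k.val % 2 = 0 → lab m k < m / 2 := by
    intro k h; have := k.isLt; unfold lab; rw [if_pos h]; omega
  have hBbig : ∀ k : Fin m, k.val % 2 = 1 → m / 2 ≤ lab m k := by
    intro k h; have := k.isLt; unfold lab; rw [if_neg (by omega)]; split_ifs <;> omega
  have hBinj : Function.Injective (lab m) := by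
    intro x y h
    have hx := x.isLt; have hy := y.isLt
    unfold lab at h
    split_ifs at h <;> exact Fin.ext (by omega)
  -- arithmetic of successor mod m
  have hnat : ∀ a : ℕ, a < m → (a + 1) % m = if a + 1 = m then 0 else a + 1 := by
    intro a ha
    split_ifs with h
    · rw [h, Nat.mod_self]
    · exact Nat.mod_eq_of_lt (by omega)
  have hval : ∀ k : Fin m, ((k + 1 : Fin m)).val = if k.val + 1 = m then 0 else k.val + 1 := by
    intro k
    have h2 : (1 : Fin m).val = 1 := by
      rw [Fin.val_one']; exact Nat.mod_eq_of_lt (by omega)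
    rw [Fin.val_add, h2, hnat _ k.isLt]
  -- adjacent vertices have opposite parity
  have hpar : ∀ u v : Fin m, (CycleG m).Adj u v → u.val % 2 ≠ v.val % 2 := by
    rintro u v ⟨hne, hor | hor⟩ <;>
    · have hu := u.isLt; have hv := v.isLt
      rw [hnat _ (by omega)] at hor
      split_ifs at hor <;> omega
  -- the oriented edge map
  set g : Fin m → Fin m × Fin m :=
    fun k => if k.val % 2 = 0 then (k, k + 1) else (k + 1, k) with hgdef
  have hg1 : ∀ k : Fin m, k.val % 2 = 0 → g k = (k, k + 1) := by
    intro k h; simp only [hgdef, if_pos h]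
  have hg2 : ∀ k : Fin m, k.val % 2 ≠ 0 → g k = (k + 1, k) := by
    intro k h; simp only [hgdef, if_neg h]
  have hkne : ∀ k : Fin m, k ≠ k + 1 := by
    intro k he
    have h1 : k.val = ((k + 1 : Fin m)).val := congrArg Fin.val he
    rw [hval] at h1
    have := k.isLt
    split_ifs at h1 <;> omega
  have hgadj : ∀ k : Fin m,
      (CycleG m).Adj (g k).1 (g k).2 ∧ lab m (g k).1 < lab m (g k).2 := by
    intro k
    have hk1 := hval k
    have hklt := k.isLt
    by_cases hk : k.val % 2 = 0
    · rw [hg1 _ hk]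
      have hp2 : ((k + 1 : Fin m)).val % 2 = 1 := by rw [hk1]; split_ifs <;> omega
      refine ⟨⟨hkne k, Or.inl ?_⟩, lt_of_lt_of_le (hBsmall _ hk) (hBbig _ hp2)⟩
      rw [hnat _ hklt, hk1]
    · rw [hg2 _ hk]
      have hk' : k.val % 2 = 1 := by omega
      have hp2 : ((k + 1 : Fin m)).val % 2 = 0 := by rw [hk1]; split_ifs <;> omega
      refine ⟨⟨Ne.symm (hkne k), Or.inr ?_⟩, lt_of_lt_of_le (hBsmall _ hp2) (hBbig _ hk')⟩
      rw [hnat _ hklt, hk1]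
  have hginj : Function.Injective g := by
    intro a b h
    have ha := a.isLt; have hb := b.isLt
    by_cases hae : a.val % 2 = 0 <;> by_cases hbe : b.val % 2 = 0
    · rw [hg1 _ hae, hg1 _ hbe] at h
      exact congrArg Prod.fst h
    · rw [hg1 _ hae, hg2 _ hbe] at h
      have h1 : a.val = ((b + 1 : Fin m)).val := congrArg (fun p => (Prod.fst p).val) h
      have h2 : ((a + 1 : Fin m)).val = b.val := congrArg (fun p => (Prod.snd p).val) h
      rw [hval] at h1 h2
      split_ifs at h1 h2 <;> exact Fin.ext (by omega)
    · rw [hg2 _ hae, hg1 _ hbe] at h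
      have h1 : ((a + 1 : Fin m)).val = b.val := congrArg (fun p => (Prod.fst p).val) h
      have h2 : a.val = ((b + 1 : Fin m)).val := congrArg (fun p => (Prod.snd p).val) h
      rw [hval] at h1 h2
      split_ifs at h1 h2 <;> exact Fin.ext (by omega)
    · rw [hg2 _ hae, hg2 _ hbe] at h
      exact congrArg Prod.snd h
  -- the filtered pair set is the image of g
  have hS : (Finset.univ.filter fun p : Fin m × Fin m =>
        (CycleG m).Adj p.1 p.2 ∧ lab m p.1 < lab m p.2) =
      Finset.map ⟨g, hginj⟩ Finset.univ := by
    ext p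
    simp only [Finset.mem_filter, Finset.mem_univ, true_and, Finset.mem_map,
      Function.Embedding.coeFn_mk]
    constructor
    · rintro ⟨hadj, hlt⟩
      have hp1 : p.1.val % 2 = 0 := by
        by_contra hodd
        have h1 : p.1.val % 2 = 1 := by omega
        have h2 : p.2.val % 2 = 0 := by have := hpar _ _ hadj; omega
        have := hBbig _ h1; have := hBsmall _ h2; omega
      obtain ⟨hne, hor | hor⟩ := hadj
      · refine ⟨p.1, ?_⟩
        rw [hg1 _ hp1]
        refine Prod.ext rfl (Fin.ext ?_)
        rw [hval, ← hor, hnat _ p.1.isLt]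
      · have hp2 : p.2.val % 2 ≠ 0 := by
          have := hpar _ _ (⟨hne, Or.inr hor⟩ : (CycleG m).Adj p.1 p.2); omega
        refine ⟨p.2, ?_⟩
        rw [hg2 _ hp2]
        refine Prod.ext (Fin.ext ?_) rfl
        rw [hval, ← hor, hnat _ p.2.isLt]
    · rintro ⟨k, rfl⟩
      exact hgadj k
  refine ⟨⟨hBinj, hBle, ?_, ?_⟩, m / 2 - 1, by omega, ?_⟩
  · -- edge count
    have hinjOn : Set.InjOn (fun p : Fin m × Fin m => s(p.1, p.2))
        ↑(Finset.univ.filter fun p : Fin m × Fin m =>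
          (CycleG m).Adj p.1 p.2 ∧ lab m p.1 < lab m p.2) := by
      intro p hp q hq h
      simp only [Finset.coe_filter, Set.mem_setOf_eq] at hp hq
      rcases Sym2.eq_iff.mp h with ⟨h1, h2⟩ | ⟨h1, h2⟩
      · exact Prod.ext h1 h2
      · exfalso
        have h3 := hp.2.2
        have h4 := hq.2.2
        rw [h1, h2] at h3
        omega
    have hedge : (CycleG m).edgeFinset =
        (Finset.univ.filter fun p : Fin m × Fin m =>
          (CycleG m).Adj p.1 p.2 ∧ lab m p.1 < lab m p.2).image
          (fun p => s(p.1, p.2)) := by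
      ext e
      refine Sym2.ind (fun u v => ?_) e
      simp only [SimpleGraph.mem_edgeFinset, SimpleGraph.mem_edgeSet, Finset.mem_image,
        Finset.mem_filter, Finset.mem_univ, true_and]
      constructor
      · intro hadj
        have hne : lab m u ≠ lab m v := fun h => hadj.ne (hBinj h)
        rcases Nat.lt_or_ge (lab m u) (lab m v) with hlt | hge
        · exact ⟨(u, v), ⟨hadj, hlt⟩, rfl⟩
        · exact ⟨(v, u), ⟨hadj.symm, show lab m v < lab m u by omega⟩, Sym2.eq_swap⟩
      · rintro ⟨p, ⟨hadj, _⟩, hpe⟩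
        rw [← SimpleGraph.mem_edgeSet, ← hpe]
        exact hadj
    rw [hedge, Finset.card_image_of_injOn hinjOn, hS, Finset.card_map, Finset.card_univ,
      Fintype.card_fin]
  · -- the multiset of differences
    rw [hS]
    simp only [Finset.map_val, Multiset.map_map, Function.comp,
      Function.Embedding.coeFn_mk]
    have hed : ∀ k : Fin m, lab m (g k).2 - lab m (g k).1 =
        (if k.val < m / 2 then m - k.val else if k.val = m - 1 then m / 2
          else m - 1 - k.val) := by
      intro k
      have hklt := k.isLt
      have hk1 := hval k
      by_cases hk : k.val % 2 = 0
      · rw [hg1 _ hk]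
        simp only
        unfold lab
        rw [hk1]
        split_ifs <;> omega
      · rw [hg2 _ hk]
        simp only
        unfold lab
        rw [hk1]
        split_ifs <;> omega
    set ED : Fin m → ℕ := fun k =>
      (if k.val < m / 2 then m - k.val else if k.val = m - 1 then m / 2
        else m - 1 - k.val) with hEDdef
    have hmapED : Multiset.map (fun k : Fin m => lab m (g k).2 - lab m (g k).1)
        Finset.univ.val = Multiset.map ED Finset.univ.val :=
      Multiset.map_congr rfl (fun k _ => hed k)
    rw [hmapED]
    have hEDinj : Function.Injective ED := by
      intro a b h
      have ha := a.isLt; have hb := b.isLt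
      simp only [hEDdef] at h
      split_ifs at h <;> exact Fin.ext (by omega)
    have hEDimg : Finset.image ED Finset.univ = Finset.Icc 1 m := by
      apply Finset.eq_of_subset_of_card_le
      · intro n hn
        obtain ⟨k, _, hk⟩ := Finset.mem_image.mp hn
        have := k.isLt
        rw [Finset.mem_Icc]
        simp only [hEDdef] at hk
        split_ifs at hk <;> omega
      · rw [Nat.card_Icc, Finset.card_image_of_injOn (hEDinj.injOn),
          Finset.card_univ, Fintype.card_fin]
        omega
    rw [← hEDimg, Finset.image_val_of_injOn hEDinj.injOn]
  · -- the separating value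
    intro u v hadj
    have hp := hpar _ _ hadj
    by_cases hu : u.val % 2 = 0
    · right
      have h1 := hBsmall _ hu
      have h2 := hBbig v (by omega)
      omega
    · left
      have h1 := hBbig u (by omega)
      have h2 := hBsmall v (by omega)
      omega
end

section
/- Let m ≥ 2 be even and let P_m* be the unidirectional path digraph with vertices v_1,…,v_m and directed edges (v_1,v_2), (v_2,v_3), …, (v_{m−1},v_m). Let l ≥ 1, and define subsets of Z_{(m−1)l²+1} by A_i = {(i·l²)/2 + j·l : 0 ≤ j ≤ l−1} for even i, and A_i = {(m − (i+1)/2)·l² − j : 0 ≤ j ≤ l−1} for odd i, for 0 ≤ i ≤ m−1 (where A_i corresponds to vertex v_{i+1}). Then (A_0, A_1, …, A_{m−1}) is an ((m−1)l² + 1, m, l, 1; P_m*)-EDF in Z_{(m−1)l²+1}: the sets are pairwise disjoint l-subsets and the multiset union ⋃_{i=0}^{m−2} Δ(A_{i+1}, A_i) equals Z_{(m−1)l²+1} ∖ {0}. -/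
/-- The multiset of external differences `a - b` for `a ∈ A`, `b ∈ B`. -/
def EDFdelta {G : Type*} [AddGroup G] (A B : Finset G) : Multiset G :=
  (A ×ˢ B).val.map fun p => p.1 - p.2

namespace EDFaux

/-- natural-number version of the set elements -/
def fA (m l i j : ℕ) : ℕ :=
  if i % 2 = 0 then i * l ^ 2 / 2 + j * l else (m - (i + 1) / 2) * l ^ 2 - j

/-- natural-number version of the edge differences -/
def gE (m l i j j' : ℕ) : ℕ :=
  if i % 2 = 0 then (m - 1 - i) * l ^ 2 - (j + j' * l) else i * l ^ 2 + 1 + (j * l + j')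

/-- interval index of edge `i` -/
def kE (m i : ℕ) : ℕ := if i % 2 = 0 then m - 2 - i else i

lemma key_mul {l j : ℕ} (hj : j < l) : j * l + l ≤ l ^ 2 := by
  have : (j + 1) * l ≤ l * l := Nat.mul_le_mul_right _ hj
  calc j * l + l = (j + 1) * l := by ring
    _ ≤ l * l := this
    _ = l ^ 2 := (sq l).symm

lemma fA_even {m l i j : ℕ} (hi : i % 2 = 0) : fA m l i j = (i / 2) * l ^ 2 + j * l := by
  unfold fA
  rw [if_pos hi]
  obtain ⟨s, rfl⟩ : ∃ s, i = 2 * s := ⟨i / 2, by omega⟩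
  have h1 : 2 * s * l ^ 2 = 2 * (s * l ^ 2) := by ring
  have h2 : 2 * s / 2 = s := by omega
  rw [h1, Nat.mul_div_cancel_left _ (by norm_num), h2]

lemma fA_odd {m l i j : ℕ} (hi : i % 2 = 1) : fA m l i j = (m - (i + 1) / 2) * l ^ 2 - j := by
  unfold fA; rw [if_neg (by omega)]

lemma kE_le {m i : ℕ} (hi : i < m - 1) : kE m i ≤ m - 2 := by
  unfold kE; split <;> omega

lemma kE_ne {m i j : ℕ} (hmeven : m % 2 = 0) (hi : i < m - 1) (hj : j < m - 1)
    (hij : i ≠ j) : kE m i ≠ kE m j := by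
  unfold kE; split <;> split <;> omega

lemma hll {l : ℕ} (hl : 1 ≤ l) : l ≤ l ^ 2 := by
  calc l = l * 1 := (mul_one l).symm
    _ ≤ l * l := Nat.mul_le_mul_left _ hl
    _ = l ^ 2 := (sq l).symm

/-- the main cast computation for each edge -/
lemma edge_cast {m l : ℕ} (hm : 2 ≤ m) (hl : 1 ≤ l) {i j j' : ℕ}
    (hi : i < m - 1) (hj : j < l) (hj' : j' < l) :
    (fA m l (i + 1) j : ZMod ((m - 1) * l ^ 2 + 1)) - (fA m l i j' : ZMod ((m - 1) * l ^ 2 + 1))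
      = (gE m l i j j' : ZMod ((m - 1) * l ^ 2 + 1)) := by
  rcases Nat.even_or_odd i with he | ho
  · -- i even
    have h2 : i % 2 = 0 := Nat.even_iff.1 he
    obtain ⟨s, rfl⟩ : ∃ s, i = 2 * s := ⟨i / 2, by omega⟩
    have hfe : fA m l (2 * s) j' = s * l ^ 2 + j' * l := by
      rw [fA_even h2]; congr 2; omega
    have hfo : fA m l (2 * s + 1) j = (m - (s + 1)) * l ^ 2 - j := by
      rw [fA_odd (by omega)]; congr 3; omega
    have hg : gE m l (2 * s) j j' = (m - 1 - 2 * s) * l ^ 2 - (j + j' * l) := by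
      unfold gE; rw [if_pos h2]
    have h1 : (m - 1 - 2 * s) * l ^ 2 + s * l ^ 2 = (m - (s + 1)) * l ^ 2 := by
      rw [← Nat.add_mul]; congr 1; omega
    have h3 : l ^ 2 ≤ (m - 1 - 2 * s) * l ^ 2 := Nat.le_mul_of_pos_left _ (by omega)
    have habs : ∀ P Q R L Y j l : ℕ, P + Q = R → Y + l ≤ L → L ≤ P → j < l →
        P - (j + Y) + (Q + Y) = R - j := by intros; omega
    have hid : gE m l (2 * s) j j' + fA m l (2 * s) j' = fA m l (2 * s + 1) j := by
      rw [hfe, hfo, hg]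
      exact habs _ _ _ (l ^ 2) (j' * l) j l h1 (key_mul hj') h3 hj
    have hcast := congrArg (Nat.cast : ℕ → ZMod ((m - 1) * l ^ 2 + 1)) hid
    rw [Nat.cast_add] at hcast
    linear_combination -hcast
  · -- i odd
    have h2 : i % 2 = 1 := Nat.odd_iff.1 ho
    obtain ⟨s, rfl⟩ : ∃ s, i = 2 * s + 1 := ⟨i / 2, by omega⟩
    have hfe : fA m l (2 * s + 1 + 1) j = (s + 1) * l ^ 2 + j * l := by
      rw [fA_even (by omega)]; congr 2; omega
    have hfo : fA m l (2 * s + 1) j' = (m - (s + 1)) * l ^ 2 - j' := by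
      rw [fA_odd h2]; congr 3; omega
    have hg : gE m l (2 * s + 1) j j' = (2 * s + 1) * l ^ 2 + 1 + (j * l + j') := by
      unfold gE; rw [if_neg (by omega)]
    have h1 : (2 * s + 1) * l ^ 2 + (m - (s + 1)) * l ^ 2
        = (s + 1) * l ^ 2 + (m - 1) * l ^ 2 := by
      rw [← Nat.add_mul, ← Nat.add_mul]; congr 1; omega
    have h4 : l ^ 2 ≤ (m - (s + 1)) * l ^ 2 := Nat.le_mul_of_pos_left _ (by omega)
    have habs : ∀ X1 X2 X3 X4 L Y j' l : ℕ, X1 + X3 = X2 + X4 → j' < l → l ≤ L → L ≤ X3 →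
        X1 + 1 + (Y + j') + (X3 - j') = X2 + Y + (X4 + 1) := by intros; omega
    have hid : gE m l (2 * s + 1) j j' + fA m l (2 * s + 1) j'
        = fA m l (2 * s + 1 + 1) j + ((m - 1) * l ^ 2 + 1) := by
      rw [hfe, hfo, hg]
      exact habs _ _ _ _ (l ^ 2) (j * l) j' l h1 hj' (hll hl) h4
    have hcast := congrArg (Nat.cast : ℕ → ZMod ((m - 1) * l ^ 2 + 1)) hid
    rw [Nat.cast_add, Nat.cast_add, ZMod.natCast_self, add_zero] at hcast
    linear_combination -hcast

lemma gE_mem {m l : ℕ} (hm : 2 ≤ m) (hl : 1 ≤ l) {i j j' : ℕ}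
    (hi : i < m - 1) (hj : j < l) (hj' : j' < l) :
    gE m l i j j' ∈ Finset.Ioc (kE m i * l ^ 2) ((kE m i + 1) * l ^ 2) := by
  rw [Finset.mem_Ioc]
  rcases Nat.even_or_odd i with he | ho
  · have h2 : i % 2 = 0 := Nat.even_iff.1 he
    have hg : gE m l i j j' = (m - 1 - i) * l ^ 2 - (j + j' * l) := by
      unfold gE; rw [if_pos h2]
    have hk : kE m i = m - 2 - i := by unfold kE; rw [if_pos h2]
    have h1 : (m - 2 - i) * l ^ 2 + l ^ 2 = (m - 1 - i) * l ^ 2 := by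
      rw [← Nat.succ_mul]; congr 1; omega
    have h2' := key_mul hj'
    have habs : ∀ A B L Y j l : ℕ, A + L = B → Y + l ≤ L → j < l →
        A < B - (j + Y) ∧ B - (j + Y) ≤ B := by intros; omega
    have hEq : (m - 2 - i + 1) * l ^ 2 = (m - 1 - i) * l ^ 2 := by congr 1; omega
    rw [hg, hk, hEq]
    exact habs _ _ (l ^ 2) (j' * l) j l h1 h2' hj
  · have h2 : i % 2 = 1 := Nat.odd_iff.1 ho
    have hg : gE m l i j j' = i * l ^ 2 + 1 + (j * l + j') := by
      unfold gE; rw [if_neg (by omega)]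
    have hk : kE m i = i := by unfold kE; rw [if_neg (by omega)]
    have h1 : (i + 1) * l ^ 2 = i * l ^ 2 + l ^ 2 := by rw [Nat.succ_mul]
    have h2' := key_mul hj
    have habs : ∀ A L Y j' l : ℕ, Y + l ≤ L → j' < l →
        A < A + 1 + (Y + j') ∧ A + 1 + (Y + j') ≤ A + L := by intros; omega
    rw [hg, hk, h1]
    exact habs _ (l ^ 2) (j * l) j' l h2' hj'

lemma gE_surj {m l : ℕ} (hm : 2 ≤ m) (hl : 1 ≤ l) {i t : ℕ} (hi : i < m - 1)
    (ht : t ∈ Finset.Ioc (kE m i * l ^ 2) ((kE m i + 1) * l ^ 2)) :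
    ∃ j < l, ∃ j' < l, gE m l i j j' = t := by
  rw [Finset.mem_Ioc] at ht
  obtain ⟨ht1, ht2⟩ := ht
  have hL : 0 < l ^ 2 := by positivity
  rcases Nat.even_or_odd i with he | ho
  · have h2 : i % 2 = 0 := Nat.even_iff.1 he
    have hk : kE m i = m - 2 - i := by unfold kE; rw [if_pos h2]
    have hk1 : (m - 1 - i) = kE m i + 1 := by rw [hk]; omega
    set B := (m - 1 - i) * l ^ 2 with hB
    have hBle : t ≤ B := by rw [hB, hk1]; exact ht2
    set r := B - t with hr
    have hBgt : B = kE m i * l ^ 2 + l ^ 2 := by rw [hB, hk1, Nat.succ_mul]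
    have hrlt : r < l ^ 2 := by omega
    refine ⟨r % l, Nat.mod_lt _ (by omega), r / l, ?_, ?_⟩
    · rw [Nat.div_lt_iff_lt_mul (by omega)]
      calc r < l ^ 2 := hrlt
        _ = l * l := sq l
    · have hsum : r % l + r / l * l = r := by
        rw [Nat.mul_comm]; exact Nat.mod_add_div r l
      have hg : gE m l i (r % l) (r / l) = (m - 1 - i) * l ^ 2 - (r % l + r / l * l) := by
        unfold gE; rw [if_pos h2]
      rw [hg, hsum, ← hB, hr, Nat.sub_sub_self hBle]
  · have h2 : i % 2 = 1 := Nat.odd_iff.1 ho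
    have hk : kE m i = i := by unfold kE; rw [if_neg (by omega)]
    have h1 : (i + 1) * l ^ 2 = i * l ^ 2 + l ^ 2 := by rw [Nat.succ_mul]
    rw [hk] at ht1 ht2
    rw [h1] at ht2
    set r := t - (i * l ^ 2 + 1) with hr
    have hrlt : r < l ^ 2 := by omega
    refine ⟨r / l, ?_, r % l, Nat.mod_lt _ (by omega), ?_⟩
    · rw [Nat.div_lt_iff_lt_mul (by omega)]
      calc r < l ^ 2 := hrlt
        _ = l * l := sq l
    · have hsum : r / l * l + r % l = r := by
        rw [Nat.mul_comm]; exact Nat.div_add_mod r l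
      have hg : gE m l i (r / l) (r % l) = i * l ^ 2 + 1 + (r / l * l + r % l) := by
        unfold gE; rw [if_neg (by omega)]
      rw [hg, hsum]; omega

/-- even-indexed values are at most `(m/2)l² - l` -/
lemma fA_even_le {m l i j : ℕ} (hl : 1 ≤ l)
    (hi : i < m) (hieven : i % 2 = 0) (hmeven : m % 2 = 0) (hj : j < l) :
    fA m l i j + l ≤ (m / 2) * l ^ 2 := by
  rw [fA_even hieven]
  have h1 : (i / 2 + 1) * l ^ 2 ≤ (m / 2) * l ^ 2 := Nat.mul_le_mul_right _ (by omega)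
  rw [Nat.add_mul, one_mul] at h1
  have h2 := key_mul hj
  omega

/-- odd-indexed values are at least `(m/2)l² - l + 1` -/
lemma fA_odd_ge {m l i j : ℕ} (hm : 2 ≤ m) (hmeven : m % 2 = 0) (hl : 1 ≤ l)
    (hi : i < m) (hiodd : i % 2 = 1) (hj : j < l) :
    (m / 2) * l ^ 2 + 1 ≤ fA m l i j + l := by
  rw [fA_odd hiodd]
  have h1 : (m / 2) * l ^ 2 ≤ (m - (i + 1) / 2) * l ^ 2 := Nat.mul_le_mul_right _ (by omega)
  have h2 : l ^ 2 ≤ (m - (i + 1) / 2) * l ^ 2 := Nat.le_mul_of_pos_left _ (by omega)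
  have h3 := hll hl
  omega

lemma fA_lt {m l i j : ℕ} (hm : 2 ≤ m) (hmeven : m % 2 = 0) (hl : 1 ≤ l)
    (hi : i < m) (hj : j < l) : fA m l i j < (m - 1) * l ^ 2 + 1 := by
  rcases Nat.even_or_odd i with he | ho
  · have h2 : i % 2 = 0 := Nat.even_iff.1 he
    have := fA_even_le hl hi h2 hmeven hj
    have h1 : (m / 2) * l ^ 2 ≤ (m - 1) * l ^ 2 := Nat.mul_le_mul_right _ (by omega)
    omega
  · have h2 : i % 2 = 1 := Nat.odd_iff.1 ho
    rw [fA_odd h2]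
    have h1 : (m - (i + 1) / 2) * l ^ 2 ≤ (m - 1) * l ^ 2 := Nat.mul_le_mul_right _ (by omega)
    omega

lemma fA_inj {m l i i' j j' : ℕ} (hm : 2 ≤ m) (hmeven : m % 2 = 0) (hl : 1 ≤ l)
    (hi : i < m) (hi' : i' < m) (hj : j < l) (hj' : j' < l)
    (h : fA m l i j = fA m l i' j') : i = i' ∧ j = j' := by
  have hL := hll hl
  rcases Nat.even_or_odd i with he | ho <;> rcases Nat.even_or_odd i' with he' | ho'
  · have h2 : i % 2 = 0 := Nat.even_iff.1 he
    have h2' : i' % 2 = 0 := Nat.even_iff.1 he'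
    rw [fA_even h2, fA_even h2'] at h
    have hii : i = i' := by
      by_contra hne
      rcases Nat.lt_or_ge i i' with hlt | hge
      · have hs : i / 2 + 1 ≤ i' / 2 := by omega
        have hmul : (i / 2 + 1) * l ^ 2 ≤ (i' / 2) * l ^ 2 := Nat.mul_le_mul_right _ hs
        rw [Nat.add_mul, one_mul] at hmul
        have := key_mul hj
        omega
      · have hlt : i' < i := by omega
        have hs : i' / 2 + 1 ≤ i / 2 := by omega
        have hmul : (i' / 2 + 1) * l ^ 2 ≤ (i / 2) * l ^ 2 := Nat.mul_le_mul_right _ hs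
        rw [Nat.add_mul, one_mul] at hmul
        have := key_mul hj'
        omega
    subst hii
    refine ⟨rfl, ?_⟩
    have : j * l = j' * l := by omega
    exact Nat.eq_of_mul_eq_mul_right (by omega) this
  · exfalso
    have h2 : i % 2 = 0 := Nat.even_iff.1 he
    have h2' : i' % 2 = 1 := Nat.odd_iff.1 ho'
    have ha := fA_even_le hl hi h2 hmeven hj
    have hb := fA_odd_ge hm hmeven hl hi' h2' hj'
    omega
  · exfalso
    have h2 : i % 2 = 1 := Nat.odd_iff.1 ho
    have h2' : i' % 2 = 0 := Nat.even_iff.1 he'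
    have ha := fA_odd_ge hm hmeven hl hi h2 hj
    have hb := fA_even_le hl hi' h2' hmeven hj'
    omega
  · have h2 : i % 2 = 1 := Nat.odd_iff.1 ho
    have h2' : i' % 2 = 1 := Nat.odd_iff.1 ho'
    rw [fA_odd h2, fA_odd h2'] at h
    have hc : l ^ 2 ≤ (m - (i + 1) / 2) * l ^ 2 := Nat.le_mul_of_pos_left _ (by omega)
    have hc' : l ^ 2 ≤ (m - (i' + 1) / 2) * l ^ 2 := Nat.le_mul_of_pos_left _ (by omega)
    have hii : i = i' := by
      by_contra hne
      rcases Nat.lt_or_ge i i' with hlt | hge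
      · have hs : m - (i' + 1) / 2 + 1 ≤ m - (i + 1) / 2 := by omega
        have hmul : (m - (i' + 1) / 2 + 1) * l ^ 2 ≤ (m - (i + 1) / 2) * l ^ 2 :=
          Nat.mul_le_mul_right _ hs
        rw [Nat.add_mul, one_mul] at hmul
        omega
      · have hlt : i' < i := by omega
        have hs : m - (i + 1) / 2 + 1 ≤ m - (i' + 1) / 2 := by omega
        have hmul : (m - (i + 1) / 2 + 1) * l ^ 2 ≤ (m - (i' + 1) / 2) * l ^ 2 :=
          Nat.mul_le_mul_right _ hs
        rw [Nat.add_mul, one_mul] at hmul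
        omega
    subst hii
    exact ⟨rfl, by omega⟩

lemma ioc_disj {a b L t : ℕ} (hab : a ≠ b) (h1 : a * L < t) (h2 : t ≤ (a + 1) * L)
    (h3 : b * L < t) (h4 : t ≤ (b + 1) * L) : False := by
  rcases lt_trichotomy a b with h | h | h
  · have h5 : (a + 1) * L ≤ b * L := Nat.mul_le_mul_right _ (by omega)
    exact lt_irrefl _ (lt_of_le_of_lt (h2.trans h5) h3)
  · exact hab h
  · have h5 : (b + 1) * L ≤ a * L := Nat.mul_le_mul_right _ (by omega)
    exact lt_irrefl _ (lt_of_le_of_lt (h4.trans h5) h1)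

end EDFaux

open EDFaux in
/-- Theorem: let `m ≥ 2` be even and `l ≥ 1`, and let `P_m*` be the unidirectional path with
directed edges `(v_1,v_2), …, (v_{m-1},v_m)`.  The sets `A_i ⊆ Z_{(m-1)l²+1}` given by
`A_i = {(i·l²)/2 + j·l : 0 ≤ j ≤ l-1}` for `i` even and
`A_i = {(m - (i+1)/2)·l² - j : 0 ≤ j ≤ l-1}` for `i` odd form an
`((m-1)l² + 1, m, l, 1; P_m*)`-EDF: they are pairwise disjoint `l`-subsets and the multiset
union `⋃_{i=0}^{m-2} Δ(A_{i+1}, A_i)` equals `Z_{(m-1)l²+1} ∖ {0}`. -/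
theorem unidirectional_path_EDF (m l : ℕ) (hm : 2 ≤ m) (hmeven : m % 2 = 0) (hl : 1 ≤ l) :
    let A : ℕ → Finset (ZMod ((m - 1) * l ^ 2 + 1)) := fun i =>
      if i % 2 = 0 then
        (Finset.range l).image fun j => ((i * l ^ 2 / 2 + j * l : ℕ) : ZMod ((m - 1) * l ^ 2 + 1))
      else
        (Finset.range l).image fun j =>
          (((m - (i + 1) / 2) * l ^ 2 - j : ℕ) : ZMod ((m - 1) * l ^ 2 + 1))
    (∀ i < m, (A i).card = l) ∧
    (∀ i < m, ∀ j < m, i ≠ j → Disjoint (A i) (A j)) ∧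
    ((Finset.range (m - 1)).val.bind fun i => EDFdelta (A (i + 1)) (A i))
      = (Finset.univ \ {0} : Finset (ZMod ((m - 1) * l ^ 2 + 1))).val := by
  intro A
  have hA : ∀ i, A i = (Finset.range l).image
      (fun j => ((fA m l i j : ℕ) : ZMod ((m - 1) * l ^ 2 + 1))) := by
    intro i
    show (if i % 2 = 0 then _ else _) = _
    unfold fA
    split <;> rfl
  have hinj : ∀ a b : ℕ, a < (m - 1) * l ^ 2 + 1 → b < (m - 1) * l ^ 2 + 1 →
      ((a : ZMod ((m - 1) * l ^ 2 + 1)) = b) → a = b := by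
    intro a b ha hb h
    have := congrArg ZMod.val h
    rwa [ZMod.val_cast_of_lt ha, ZMod.val_cast_of_lt hb] at this
  have hcard : ∀ i < m, (A i).card = l := by
    intro i hi
    rw [hA i, Finset.card_image_of_injOn, Finset.card_range]
    intro a ha b hb hab
    simp only [Finset.coe_range, Set.mem_Iio] at ha hb
    have heq := hinj _ _ (fA_lt hm hmeven hl hi ha) (fA_lt hm hmeven hl hi hb) hab
    exact (fA_inj hm hmeven hl hi hi ha hb heq).2
  have hdisj : ∀ i < m, ∀ i' < m, i ≠ i' → Disjoint (A i) (A i') := by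
    intro i hi i' hi' hne
    rw [Finset.disjoint_left]
    intro x hx hx'
    rw [hA i] at hx
    rw [hA i'] at hx'
    simp only [Finset.mem_image, Finset.mem_range] at hx hx'
    obtain ⟨j, hj, hxe⟩ := hx
    obtain ⟨j', hj', hxe'⟩ := hx'
    have heq : fA m l i j = fA m l i' j' :=
      hinj _ _ (fA_lt hm hmeven hl hi hj) (fA_lt hm hmeven hl hi' hj')
        (hxe.trans hxe'.symm)
    exact hne (fA_inj hm hmeven hl hi hi' hj hj' heq).1
  refine ⟨hcard, hdisj, ?_⟩
  -- the target finsets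
  have hIle : ∀ i, i < m - 1 → ∀ t ∈ Finset.Ioc (kE m i * l ^ 2) ((kE m i + 1) * l ^ 2),
      t < (m - 1) * l ^ 2 + 1 := by
    intro i hi t ht
    rw [Finset.mem_Ioc] at ht
    have h1 : (kE m i + 1) * l ^ 2 ≤ (m - 1) * l ^ 2 :=
      Nat.mul_le_mul_right _ (by have := kE_le hi; omega)
    omega
  have hT : ∀ i < m - 1, EDFdelta (A (i + 1)) (A i) =
      ((Finset.Ioc (kE m i * l ^ 2) ((kE m i + 1) * l ^ 2)).image
        (fun t => ((t : ℕ) : ZMod ((m - 1) * l ^ 2 + 1)))).val := by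
    intro i hi
    have hi1 : i + 1 < m := by omega
    have him : i < m := by omega
    have hc1 : Multiset.card (EDFdelta (A (i + 1)) (A i)) = l * l := by
      unfold EDFdelta
      rw [Multiset.card_map]
      show (A (i + 1) ×ˢ A i).card = l * l
      rw [Finset.card_product, hcard _ hi1, hcard _ him]
    have hc2 : ((Finset.Ioc (kE m i * l ^ 2) ((kE m i + 1) * l ^ 2)).image
        (fun t => ((t : ℕ) : ZMod ((m - 1) * l ^ 2 + 1)))).card = l * l := by
      rw [Finset.card_image_of_injOn, Nat.card_Ioc]
      · rw [Nat.succ_mul, Nat.add_sub_cancel_left]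
        exact sq l
      · intro a ha b hb hab
        simp only [Finset.coe_Ioc, Set.mem_Ioc] at ha hb
        exact hinj _ _ (hIle i hi a (Finset.mem_Ioc.2 ha)) (hIle i hi b (Finset.mem_Ioc.2 hb)) hab
    have hle : ((Finset.Ioc (kE m i * l ^ 2) ((kE m i + 1) * l ^ 2)).image
        (fun t => ((t : ℕ) : ZMod ((m - 1) * l ^ 2 + 1)))).val ≤ EDFdelta (A (i + 1)) (A i) := by
      rw [Multiset.le_iff_subset (Finset.nodup _)]
      intro x hx
      rw [Finset.mem_val, Finset.mem_image] at hx
      obtain ⟨t, ht, rfl⟩ := hx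
      obtain ⟨j, hj, j', hj', hg⟩ := gE_surj hm hl hi ht
      unfold EDFdelta
      rw [Multiset.mem_map]
      refine ⟨((fA m l (i + 1) j : ZMod ((m - 1) * l ^ 2 + 1)),
        (fA m l i j' : ZMod ((m - 1) * l ^ 2 + 1))), ?_, ?_⟩
      · rw [Finset.mem_val, Finset.mem_product]
        constructor
        · rw [hA (i + 1)]
          exact Finset.mem_image.2 ⟨j, Finset.mem_range.2 hj, rfl⟩
        · rw [hA i]
          exact Finset.mem_image.2 ⟨j', Finset.mem_range.2 hj', rfl⟩
      · show (fA m l (i + 1) j : ZMod ((m - 1) * l ^ 2 + 1)) - (fA m l i j' : _) = _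
        rw [edge_cast hm hl hi hj hj', hg]
    refine (Multiset.eq_of_le_of_card_le hle ?_).symm
    show Multiset.card (EDFdelta (A (i + 1)) (A i)) ≤ _
    rw [hc1]
    exact hc2.ge
  have hbind : ((Finset.range (m - 1)).val.bind fun i => EDFdelta (A (i + 1)) (A i))
      = (Finset.range (m - 1)).val.bind (fun i =>
          ((Finset.Ioc (kE m i * l ^ 2) ((kE m i + 1) * l ^ 2)).image
            (fun t => ((t : ℕ) : ZMod ((m - 1) * l ^ 2 + 1)))).val) :=
    Multiset.bind_congr (fun i hi => hT i (by simpa using hi))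
  rw [hbind]
  have hnod1 : Multiset.Nodup ((Finset.range (m - 1)).val.bind (fun i =>
      ((Finset.Ioc (kE m i * l ^ 2) ((kE m i + 1) * l ^ 2)).image
        (fun t => ((t : ℕ) : ZMod ((m - 1) * l ^ 2 + 1)))).val)) := by
    rw [Multiset.nodup_bind]
    refine ⟨fun a _ => Finset.nodup _, ?_⟩
    refine ⟨List.range (m - 1), rfl, ?_⟩
    rw [List.pairwise_iff_getElem]
    intro a b ha hb hab
    simp only [List.length_range] at ha hb
    simp only [List.getElem_range]
    show Disjoint _ _
    rw [Multiset.disjoint_left]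
    intro x hx hx'
    rw [Finset.mem_val, Finset.mem_image] at hx hx'
    obtain ⟨t, ht, rfl⟩ := hx
    obtain ⟨t', ht', hteq⟩ := hx'
    have hteq' : t' = t :=
      hinj _ _ (hIle b hb t' ht') (hIle a ha t ht) hteq
    rw [Finset.mem_Ioc] at ht ht'
    subst hteq'
    exact ioc_disj (kE_ne hmeven ha hb (by omega)) ht.1 ht.2 ht'.1 ht'.2
  rw [Multiset.Nodup.ext hnod1 (Finset.univ \ {0}).nodup]
  intro x
  rw [Multiset.mem_bind]
  simp only [Finset.mem_val, Finset.mem_sdiff, Finset.mem_univ, Finset.mem_singleton, true_and]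
  constructor
  · rintro ⟨i, hi, hx⟩
    have hi' : i < m - 1 := by simpa using hi
    rw [Finset.mem_image] at hx
    obtain ⟨t, ht, rfl⟩ := hx
    intro h0
    have htIoc := ht
    rw [Finset.mem_Ioc] at htIoc
    have ht0 : t = 0 := hinj t 0 (hIle i hi' t ht) (by omega) (by rw [h0]; simp)
    omega
  · intro hx0
    have hvpos : 0 < x.val := by
      rcases Nat.eq_zero_or_pos x.val with h | h
      · exact absurd ((ZMod.val_eq_zero x).1 h) hx0
      · exact h
    have hvlt : x.val < (m - 1) * l ^ 2 + 1 := ZMod.val_lt x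
    have hL : 0 < l ^ 2 := by positivity
    obtain ⟨k, r, hdm, hr⟩ : ∃ k r, k * l ^ 2 + r = x.val - 1 ∧ r < l ^ 2 :=
      ⟨(x.val - 1) / l ^ 2, (x.val - 1) % l ^ 2,
        by rw [Nat.mul_comm]; exact Nat.div_add_mod _ _, Nat.mod_lt _ hL⟩
    have habs : ∀ X L r t : ℕ, X + r = t - 1 → r < L → 0 < t → X < t ∧ t ≤ X + L := by
      intros; omega
    have hk1 := habs (k * l ^ 2) (l ^ 2) r x.val hdm hr hvpos
    have hkm : k < m - 1 := by
      by_contra hge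
      have hmm : (m - 1) * l ^ 2 ≤ k * l ^ 2 := Nat.mul_le_mul_right _ (by omega)
      have habs2 : ∀ X Y t : ℕ, X < t → t < Y + 1 → Y ≤ X → False := by intros; omega
      exact habs2 (k * l ^ 2) ((m - 1) * l ^ 2) x.val hk1.1 hvlt hmm
    have hchoice : ∃ i0, i0 < m - 1 ∧ kE m i0 = k := by
      by_cases hk2 : k % 2 = 0
      · refine ⟨m - 2 - k, by omega, ?_⟩
        unfold kE
        rw [if_pos (by omega : (m - 2 - k) % 2 = 0)]
        omega
      · exact ⟨k, by omega, by unfold kE; rw [if_neg hk2]⟩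
    obtain ⟨i0, hi0, hkE⟩ := hchoice
    refine ⟨i0, by simpa using hi0, ?_⟩
    rw [Finset.mem_image]
    refine ⟨x.val, ?_, ZMod.natCast_zmod_val x⟩
    rw [Finset.mem_Ioc, hkE]
    refine ⟨hk1.1, ?_⟩
    rw [Nat.succ_mul]
    exact hk1.2
end

section
/- Let G be a digraph with n directed edges and an oriented β-valuation b, working modulo n+1. Then: (i) if gcd(n+1, k) = 1, the labelling b'(x) = k·b(x) mod (n+1) is also an oriented β-valuation of G; and (ii) for any integer m, the labelling b'(x) = b(x) + m mod (n+1) is also an oriented β-valuation of G. -/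
/-- Theorem: let `G` be a digraph with `n` directed edges (given as a finite set `E` of ordered
pairs) and an oriented β-valuation `b`, working modulo `n+1`.  Then:
(i) if `gcd(n+1, k) = 1`, the labelling `b'(x) = k·b(x) mod (n+1)` is also an oriented
β-valuation of `G`; and
(ii) for any integer `m`, the labelling `b'(x) = (b(x) + m) mod (n+1)` is also an oriented
β-valuation of `G`. -/
theorem scale_and_translate_oriented_beta
    {V : Type*} [DecidableEq V] (n : ℕ) (E : Finset (V × V)) (hE : E.card = n)
    (b : V → ℕ) (hinj : Function.Injective b) (hbd : ∀ v, b v ≤ n)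
    (hbeta : E.val.map (fun q => ((b q.2 : ZMod (n + 1)) - (b q.1 : ZMod (n + 1))))
      = (Finset.univ \ {0} : Finset (ZMod (n + 1))).val) :
    (∀ k : ℕ, Nat.gcd (n + 1) k = 1 →
      (Function.Injective (fun x : V => k * b x % (n + 1)) ∧
       (∀ v, k * b v % (n + 1) ≤ n) ∧
       E.val.map (fun q => (((k * b q.2 % (n + 1) : ℕ) : ZMod (n + 1))
            - ((k * b q.1 % (n + 1) : ℕ) : ZMod (n + 1))))
         = (Finset.univ \ {0} : Finset (ZMod (n + 1))).val))
    ∧ (∀ m : ℤ,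
      (Function.Injective (fun x : V => (((b x : ℤ) + m) % ((n : ℤ) + 1)).toNat) ∧
       (∀ v, (((b v : ℤ) + m) % ((n : ℤ) + 1)).toNat ≤ n) ∧
       E.val.map (fun q => ((((((b q.2 : ℤ) + m) % ((n : ℤ) + 1)).toNat : ℕ) : ZMod (n + 1))
            - ((((((b q.1 : ℤ) + m) % ((n : ℤ) + 1)).toNat : ℕ)) : ZMod (n + 1))))
         = (Finset.univ \ {0} : Finset (ZMod (n + 1))).val)) := by
  haveI : NeZero (n + 1) := ⟨Nat.succ_ne_zero n⟩
  have hval : ∀ x : V, ((b x : ZMod (n+1))).val = b x := fun x =>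
    ZMod.val_natCast_of_lt (Nat.lt_succ_of_le (hbd x))
  constructor
  · intro k hk
    have hkcop : Nat.Coprime k (n + 1) := (Nat.coprime_comm.mp hk)
    set u : (ZMod (n+1))ˣ := ZMod.unitOfCoprime k hkcop with hu
    have hcu : (u : ZMod (n+1)) = (k : ZMod (n+1)) := ZMod.coe_unitOfCoprime k hkcop
    refine ⟨?_, ?_, ?_⟩
    · intro x y h
      simp only at h
      have hz : ((k * b x % (n+1) : ℕ) : ZMod (n+1)) = ((k * b y % (n+1) : ℕ) : ZMod (n+1)) := by
        rw [h]
      rw [ZMod.natCast_mod, ZMod.natCast_mod] at hz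
      push_cast at hz
      have hb : (b x : ZMod (n+1)) = (b y : ZMod (n+1)) := by
        rw [← hcu] at hz
        exact u.isUnit.mul_left_cancel hz
      have := congrArg ZMod.val hb
      rw [hval x, hval y] at this
      exact hinj this
    · intro v
      exact Nat.lt_succ_iff.mp (Nat.mod_lt _ (Nat.succ_pos n))
    · have heq : E.val.map (fun q => (((k * b q.2 % (n + 1) : ℕ) : ZMod (n + 1))
            - ((k * b q.1 % (n + 1) : ℕ) : ZMod (n + 1))))
          = (E.val.map (fun q => ((b q.2 : ZMod (n + 1)) - (b q.1 : ZMod (n + 1))))).map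
              (fun z => (u : ZMod (n+1)) * z) := by
        rw [Multiset.map_map]
        refine Multiset.map_congr rfl ?_
        intro q _
        simp only [Function.comp_apply, ZMod.natCast_mod, hcu]
        push_cast
        ring
      rw [heq, hbeta]
      -- multiplication by a unit permutes univ \ {0}
      have e : ZMod (n+1) ↪ ZMod (n+1) :=
        ⟨fun z => (u : ZMod (n+1)) * z, fun a c h => by
          exact u.isUnit.mul_left_cancel h⟩
      have : Finset.map ⟨fun z => (u : ZMod (n+1)) * z, fun a c h =>
          u.isUnit.mul_left_cancel h⟩ (Finset.univ \ {0} : Finset (ZMod (n + 1)))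
          = (Finset.univ \ {0} : Finset (ZMod (n + 1))) := by
        ext x
        simp only [Finset.mem_map, Finset.mem_sdiff, Finset.mem_univ, Finset.mem_singleton,
          true_and, Function.Embedding.coeFn_mk]
        constructor
        · rintro ⟨y, hy, rfl⟩
          exact fun h0 => hy (by
            have := congrArg (fun z => ((u⁻¹ : (ZMod (n+1))ˣ) : ZMod (n+1)) * z) h0
            simpa [← mul_assoc] using (show ((u⁻¹ : (ZMod (n+1))ˣ) : ZMod (n+1)) * ((u : ZMod (n+1)) * y) = ((u⁻¹ : (ZMod (n+1))ˣ) : ZMod (n+1)) * 0 from this))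
        · intro hx
          refine ⟨((u⁻¹ : (ZMod (n+1))ˣ) : ZMod (n+1)) * x, ?_, by show (u : ZMod (n+1)) * (((u⁻¹ : (ZMod (n+1))ˣ) : ZMod (n+1)) * x) = x; simp [← mul_assoc]⟩
          intro h0
          apply hx
          have := congrArg (fun z => (u : ZMod (n+1)) * z) h0
          simpa [← mul_assoc] using this
      calc ((Finset.univ \ {0} : Finset (ZMod (n + 1))).val).map
              (fun z => (u : ZMod (n+1)) * z)
          = (Finset.map ⟨fun z => (u : ZMod (n+1)) * z, fun a c h =>
              u.isUnit.mul_left_cancel h⟩ (Finset.univ \ {0} : Finset (ZMod (n + 1)))).val := rfl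
        _ = (Finset.univ \ {0} : Finset (ZMod (n + 1))).val := by rw [this]
  · intro m
    have hpos : (0 : ℤ) < (n : ℤ) + 1 := by positivity
    have key : ∀ a : ℤ, (((a % ((n : ℤ) + 1)).toNat : ℕ) : ZMod (n+1)) = (a : ZMod (n+1)) := by
      intro a
      have h0 : 0 ≤ a % ((n : ℤ) + 1) := Int.emod_nonneg a (by positivity)
      have : (((a % ((n : ℤ) + 1)).toNat : ℕ) : ZMod (n+1))
          = (((a % ((n : ℤ) + 1) : ℤ)) : ZMod (n+1)) := by
        rw [← Int.toNat_of_nonneg h0]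
        push_cast
        rw [Int.toNat_of_nonneg h0]
      rw [this]
      have hcast : ((n : ℤ) + 1) = ((n + 1 : ℕ) : ℤ) := by push_cast; ring
      rw [hcast, ZMod.intCast_mod]
    refine ⟨?_, ?_, ?_⟩
    · intro x y h
      simp only at h
      have hz := congrArg (fun t : ℕ => (t : ZMod (n+1))) h
      simp only [key] at hz
      push_cast at hz
      have hb : (b x : ZMod (n+1)) = (b y : ZMod (n+1)) := by
        exact_mod_cast add_right_cancel hz
      have := congrArg ZMod.val hb
      rw [hval x, hval y] at this
      exact hinj this
    · intro v
      have h1 : ((b v : ℤ) + m) % ((n : ℤ) + 1) < (n : ℤ) + 1 :=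
        Int.emod_lt_of_pos _ hpos
      have h2 : ((b v : ℤ) + m) % ((n : ℤ) + 1) ≤ (n : ℤ) := by omega
      exact Int.toNat_le.mpr h2
    · have heq : E.val.map (fun q => ((((((b q.2 : ℤ) + m) % ((n : ℤ) + 1)).toNat : ℕ) : ZMod (n + 1))
            - ((((((b q.1 : ℤ) + m) % ((n : ℤ) + 1)).toNat : ℕ)) : ZMod (n + 1))))
          = E.val.map (fun q => ((b q.2 : ZMod (n + 1)) - (b q.1 : ZMod (n + 1)))) := by
        refine Multiset.map_congr rfl ?_
        intro q _
        rw [key, key]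
        push_cast
        ring
      rw [heq, hbeta]
end
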